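/- Let G be a group of order 32 containing a subgroup K = ⟨a⟩ × ⟨b⟩ ≅ C4 × C4 of index 2, such that there exists q ∈ G \ K with a^q = b and b^q = a, and such that Z(G) = ⟨ab⟩. Then G contains an involution outside K, and consequently G ≅ C4 ≀ C2 (the wreath product of C4 by C2). -/

import Mathlib

/-!
Since `K` is abelian of index 2 and `q ∉ K`, the square `q * q` commutes with `K` and with `q`,
hence is central: `q * q = (a * b) ^ n` for some `n`. Then `r = q * a ^ (-n)` is an involution
outside `K` which still swaps `a` and `b`, so `a`, `b`, `r` satisfy the defining relations of
`(C4 × C4) ⋊ C2` and generate `G`. The induced homomorphism from the semidirect product is onto,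
hence an isomorphism as both groups have order 32. The same relations hold for the three
generators of `C4wrC2`, where the homomorphism is checked to be injective by computation.
-/

open Equiv

/-- The wreath product `C4 ≀ C2`, realized as a subgroup of `Sym 8`: the two copies of
`C4` act regularly on `{0,1,2,3}` and `{4,5,6,7}`, and the `C2` swaps the blocks. -/
def C4wrC2 : Subgroup (Perm (Fin 8)) :=
  Subgroup.closure
    {c[0, 1, 2, 3], c[4, 5, 6, 7], c[0, 4] * c[1, 5] * c[2, 6] * c[3, 7]}

namespace Subgroup

variable {G : Type*} [Group G] {K H : Subgroup G}

lemma eq_top_of_index_eq_two (hK : K.index = 2) (hKH : K ≤ H) {g : G} (hgH : g ∈ H)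
    (hgK : g ∉ K) : H = ⊤ := by
  refine eq_top_iff.2 fun x _ ↦ ?_
  by_cases hx : x ∈ K
  · exact hKH hx
  · have hxg : x * g ∈ K := (mul_mem_iff_of_index_two hK).2 (iff_of_false hx hgK)
    simpa using H.mul_mem (hKH hxg) (H.inv_mem hgH)

lemma mul_self_mem_center_of_index_eq_two [IsMulCommutative K] (hK : K.index = 2) {q : G}
    (hq : q ∉ K) : q * q ∈ center G := by
  have hcent : centralizer {q * q} = ⊤ :=
    eq_top_of_index_eq_two hK
      (fun x hx ↦ mem_centralizer_singleton_iff.2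
        (setLike_mul_comm hx (mul_self_mem_of_index_two hK q)))
      (mem_centralizer_singleton_iff.2 (mul_assoc q q q).symm) hq
  exact centralizer_eq_top_iff_subset.1 hcent rfl

end Subgroup

def zmodPowHom {M : Type*} [Monoid M] {n : ℕ} [NeZero n] (x : M) (hx : x ^ n = 1) :
    Multiplicative (ZMod n) →* M where
  toFun k := x ^ k.toAdd.val
  map_one' := by simp
  map_mul' k l := by rw [toAdd_mul, ZMod.val_add, ← pow_eq_pow_mod _ hx, pow_add]

def swapAction :
    Multiplicative (ZMod 2) →* MulAut (Multiplicative (ZMod 4) × Multiplicative (ZMod 4)) :=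
  zmodPowHom MulEquiv.prodComm (by ext <;> rfl)

abbrev WreathC4C2 : Type :=
  (Multiplicative (ZMod 4) × Multiplicative (ZMod 4)) ⋊[swapAction] Multiplicative (ZMod 2)

lemma card_wreathC4C2 : Nat.card WreathC4C2 = 32 := by
  simp [SemidirectProduct.card]

/-- The defining relations of `WreathC4C2` on the images `x`, `y`, `z` of its generators
`(1, 0)`, `(0, 1)` of `C4 × C4` and `1` of `C2`. -/
structure IsWreathTriple {M : Type*} [Group M] (x y z : M) : Prop where
  pow_four_left : x ^ 4 = 1
  pow_four_right : y ^ 4 = 1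
  sq_swap : z ^ 2 = 1
  commute : Commute x y
  conj_left : z * x * z⁻¹ = y

namespace IsWreathTriple

variable {M : Type*} [Group M]

lemma of_conj_swap {a b q : M} (ha : a ^ 4 = 1) (hb : b ^ 4 = 1) (hab : Commute a b)
    (hqa : q⁻¹ * a * q = b) (hqb : q⁻¹ * b * q = a) {n : ℤ} (hn : q * q = (a * b) ^ n) :
    IsWreathTriple a b (q * a ^ (-n)) where
  pow_four_left := ha
  pow_four_right := hb
  commute := hab
  sq_swap :=
    calc (q * a ^ (-n)) ^ 2 = (q * q) * (q⁻¹ * a * q⁻¹⁻¹) ^ (-n) * a ^ (-n) := by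
          rw [conj_zpow, sq]; group
      _ = 1 := by rw [hn, inv_inv, hqa, hab.mul_zpow]; group
  conj_left :=
    calc q * a ^ (-n) * a * (q * a ^ (-n))⁻¹ = q * a * q⁻¹ := by group
      _ = b := by rw [← hqb]; group

variable {x y z : M} (h : IsWreathTriple x y z)
include h

lemma conj_right : z * y * z⁻¹ = x := by
  have hzz : z * z = 1 := by rw [← sq, h.sq_swap]
  calc z * y * z⁻¹ = (z * z) * x * (z * z)⁻¹ := by rw [← h.conj_left]; group
    _ = x := by rw [hzz]; group

def baseHom : Multiplicative (ZMod 4) × Multiplicative (ZMod 4) →* M :=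
  (zmodPowHom x h.pow_four_left).noncommCoprod (zmodPowHom y h.pow_four_right)
    fun _ _ ↦ h.commute.pow_pow _ _

def lift : WreathC4C2 →* M :=
  SemidirectProduct.lift h.baseHom (zmodPowHom z h.sq_swap) fun k ↦ by
    refine MonoidHom.ext fun ⟨i, j⟩ ↦ ?_
    obtain hk | hk : k.toAdd = 0 ∨ k.toAdd = 1 := by generalize k.toAdd = t; revert t; decide
    · simp [swapAction, zmodPowHom, baseHom, hk]
    · have h1 : (1 : ZMod 2).val = 1 := rfl
      simp only [swapAction, zmodPowHom, baseHom, hk, h1, pow_one, MonoidHom.comp_apply,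
        MulEquiv.coe_toMonoidHom, MonoidHom.coe_mk, OneHom.coe_mk, MonoidHom.noncommCoprod_apply,
        MulEquiv.coe_prodComm, Prod.fst_swap, Prod.snd_swap, MulAut.conj_apply, map_mul]
      rw [← conj_pow, ← conj_pow, h.conj_left, h.conj_right]
      exact (h.commute.pow_pow _ _).eq

lemma lift_apply (w : WreathC4C2) :
    h.lift w = x ^ w.left.1.toAdd.val * y ^ w.left.2.toAdd.val * z ^ w.right.toAdd.val :=
  rfl

lemma range_lift : h.lift.range = Subgroup.closure {x, y, z} := by
  apply le_antisymm
  · rintro _ ⟨w, rfl⟩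
    have hpow : ∀ g ∈ ({x, y, z} : Set M), ∀ n : ℕ, g ^ n ∈ Subgroup.closure {x, y, z} :=
      fun g hg n ↦ pow_mem (Subgroup.subset_closure hg) n
    rw [h.lift_apply]
    exact mul_mem (mul_mem (hpow x (by simp) _) (hpow y (by simp) _)) (hpow z (by simp) _)
  · rw [Subgroup.closure_le, Set.insert_subset_iff, Set.insert_subset_iff,
      Set.singleton_subset_iff]
    exact ⟨⟨.inl (.ofAdd 1, 1), show x ^ 1 * y ^ 0 * z ^ 0 = x by simp⟩,
      ⟨.inl (1, .ofAdd 1), show x ^ 0 * y ^ 1 * z ^ 0 = y by simp⟩,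
      ⟨.inr (.ofAdd 1), show x ^ 0 * y ^ 0 * z ^ 1 = z by simp⟩⟩

lemma nonempty_mulEquiv (hcard : Nat.card M = 32) (hgen : Subgroup.closure {x, y, z} = ⊤) :
    Nonempty (WreathC4C2 ≃* M) := by
  have hsurj : Function.Surjective h.lift := by
    rw [← MonoidHom.range_eq_top, h.range_lift, hgen]
  have : Finite WreathC4C2 := Nat.finite_of_card_ne_zero (by simp)
  exact ⟨MulEquiv.ofBijective h.lift
    (hsurj.bijective_of_nat_card_le (by rw [hcard, card_wreathC4C2]))⟩

end IsWreathTriple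

lemma isWreathTriple_c4wrC2_generators :
    IsWreathTriple (c[0, 1, 2, 3] : Perm (Fin 8)) c[4, 5, 6, 7]
      (c[0, 4] * c[1, 5] * c[2, 6] * c[3, 7]) :=
  ⟨by decide, by decide, by decide, by unfold Commute SemiconjBy; decide, by decide⟩

set_option maxRecDepth 4000 in
lemma nonempty_wreathC4C2_mulEquiv_c4wrC2 : Nonempty (WreathC4C2 ≃* C4wrC2) := by
  have hinj : Function.Injective isWreathTriple_c4wrC2_generators.lift := by
    refine (injective_iff_map_eq_one _).2 fun ⟨⟨i, j⟩, k⟩ ↦ ?_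
    revert i j k
    decide
  exact ⟨(MonoidHom.ofInjective hinj).trans
    (MulEquiv.subgroupCongr isWreathTriple_c4wrC2_generators.range_lift)⟩

theorem order_32_is_C4_wr_C2_general (G : Type*) [Group G] (hcard : Nat.card G = 32)
    (a b : G) (ha : orderOf a = 4) (hb : orderOf b = 4) (hab : a * b = b * a)
    (K : Subgroup G) (hK : K = Subgroup.closure {a, b})
    (hKindex : K.index = 2)
    (q : G) (hq : q ∉ K) (hqa : q⁻¹ * a * q = b) (hqb : q⁻¹ * b * q = a)
    (hcent : Subgroup.center G = Subgroup.zpowers (a * b)) :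
    (∃ r : G, r ∉ K ∧ orderOf r = 2) ∧ Nonempty (G ≃* C4wrC2) := by
  have haK : a ∈ K := hK ▸ Subgroup.subset_closure (by simp)
  have : IsMulCommutative K := hK ▸ Subgroup.isMulCommutative_closure (by
    rintro x (rfl | rfl) y (rfl | rfl) <;> simp [hab])
  obtain ⟨n, hn⟩ := Subgroup.mem_zpowers_iff.1
    (hcent ▸ Subgroup.mul_self_mem_center_of_index_eq_two hKindex hq)
  have h := IsWreathTriple.of_conj_swap (ha ▸ pow_orderOf_eq_one a) (hb ▸ pow_orderOf_eq_one b)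
    hab hqa hqb hn.symm
  set r := q * a ^ (-n)
  have hrK : r ∉ K := (K.mul_mem_cancel_right (K.zpow_mem haK _)).not.2 hq
  have hgen : Subgroup.closure {a, b, r} = ⊤ :=
    Subgroup.eq_top_of_index_eq_two hKindex (hK ▸ Subgroup.closure_mono
      (Set.insert_subset_insert (Set.singleton_subset_iff.2 (Set.mem_insert b _))))
      (Subgroup.subset_closure (by simp)) hrK
  obtain ⟨eG⟩ := h.nonempty_mulEquiv hcard hgen
  obtain ⟨eP⟩ := nonempty_wreathC4C2_mulEquiv_c4wrC2
  exact ⟨⟨r, hrK, orderOf_eq_prime h.sq_swap fun hr ↦ hrK (hr ▸ K.one_mem)⟩,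
    ⟨eG.symm.trans eP⟩⟩

/-- Let `G` be a group of order 32 with a subgroup `K = ⟨a⟩ × ⟨b⟩ ≅ C4 × C4` of index 2,
such that some `q ∉ K` swaps `a` and `b` by conjugation, and such that `Z(G) = ⟨ab⟩`.
Then `G` has an involution outside `K`, and `G ≅ C4 ≀ C2`. -/
theorem order_32_is_C4_wr_C2 (G : Type*) [Group G] (hcard : Nat.card G = 32)
    (a b : G) (ha : orderOf a = 4) (hb : orderOf b = 4) (hab : a * b = b * a)
    (K : Subgroup G) (hK : K = Subgroup.closure {a, b})
    (hKiso : Nonempty (K ≃* Multiplicative (ZMod 4 × ZMod 4)))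
    (hKindex : K.index = 2)
    (q : G) (hq : q ∉ K) (hqa : q⁻¹ * a * q = b) (hqb : q⁻¹ * b * q = a)
    (hcent : Subgroup.center G = Subgroup.zpowers (a * b)) :
    (∃ r : G, r ∉ K ∧ orderOf r = 2) ∧ Nonempty (G ≃* C4wrC2) :=
  order_32_is_C4_wr_C2_general G hcard a b ha hb hab K hK hKindex q hq hqa hqb hcent
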